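/- Let G be a finite connected simple graph containing no cycle of even length, and let H be a finite connected simple graph. Then the following are equivalent: (1) there exists a function ε : V(G) → {+, −} such that the ε-subgraph G_ε contains a subgraph isomorphic to H; (2) H is isomorphic to a subtree of G. -/

import Mathlib

/-!
`ε` is a proper 2-colouring of `G_ε`, so every cycle of `G_ε` is a cycle of `G` of even length;
when `G` has no even cycles, `G_ε` is therefore a forest, and so is every copy of `H` inside it.
Conversely a subtree of `G` is 2-colourable, and extending a 2-colouring of it arbitrarily to the
other vertices of `G` gives an `ε` for which all its edges lie in `G_ε`.
-/

/-- The ε-subgraph of `G`: the spanning subgraph whose edges are the edges of `G`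
whose two endpoints receive different values under `ε`. -/
def epsSubgraph {V : Type*} (G : SimpleGraph V) (ε : V → Bool) : SimpleGraph V where
  Adj u v := G.Adj u v ∧ ε u ≠ ε v
  symm := ⟨fun _ _ h => ⟨h.1.symm, h.2.symm⟩⟩
  loopless := ⟨fun v h => G.loopless.irrefl v h.1⟩

/-- `G` contains a subgraph isomorphic to `H`, i.e. there is an injective graph
homomorphism from `H` to `G`. -/
def ContainsCopy {V W : Type*} (G : SimpleGraph V) (H : SimpleGraph W) : Prop :=
  ∃ f : H →g G, Function.Injective f

open SimpleGraph

section EpsSubgraph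

variable {V W : Type*} {G : SimpleGraph V} {H : SimpleGraph W}

lemma containsCopy_iff_isContained : ContainsCopy G H ↔ H ⊑ G :=
  ⟨fun ⟨f, hf⟩ => ⟨f.toCopy hf⟩, fun ⟨f⟩ => ⟨f.toHom, f.injective⟩⟩

lemma epsSubgraph_le (G : SimpleGraph V) (ε : V → Bool) : epsSubgraph G ε ≤ G :=
  fun _ _ h => h.1

def epsSubgraphColoring (G : SimpleGraph V) (ε : V → Bool) : (epsSubgraph G ε).Coloring Bool :=
  Coloring.mk ε fun h => h.2

lemma isAcyclic_epsSubgraph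
    (hNoEven : ∀ (v : V) (w : G.Walk v v), w.IsCycle → ¬ Even w.length) (ε : V → Bool) :
    (epsSubgraph G ε).IsAcyclic := by
  intro v c hc
  refine hNoEven v (c.mapLe (epsSubgraph_le G ε)) (Walk.isCycle_mapLe _ |>.mpr hc) ?_
  rw [Walk.length_mapLe, (epsSubgraphColoring G ε).even_length_iff_congr]

lemma containsCopy_epsSubgraph_extend (f : Copy H G) (c : H.Coloring Bool) :
    ContainsCopy (epsSubgraph G (Function.extend f c fun _ => false)) H := by
  refine ⟨⟨f, fun {a b} hab => ⟨f.toHom.map_adj hab, ?_⟩⟩, f.injective⟩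
  have hf : Function.Injective f := f.injective
  simpa only [hf.extend_apply] using c.valid hab

end EpsSubgraph

theorem stmt1_general {V W : Type*} (G : SimpleGraph V)
    (hNoEven : ∀ (v : V) (w : G.Walk v v), w.IsCycle → ¬ Even w.length)
    (H : SimpleGraph W) (hH : H.Connected) :
    (∃ ε : V → Bool, ContainsCopy (epsSubgraph G ε) H) ↔
      ∃ T : G.Subgraph, T.Connected ∧ T.coe.IsAcyclic ∧ Nonempty (H ≃g T.coe) := by
  constructor
  · rintro ⟨ε, f, hf⟩
    have hHacyclic : H.IsAcyclic := (isAcyclic_epsSubgraph hNoEven ε).comap f hf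
    have hHG : H ⊑ G :=
      (containsCopy_iff_isContained.mp ⟨f, hf⟩).mono_right (epsSubgraph_le G ε)
    obtain ⟨T, ⟨e⟩⟩ := isContained_iff_exists_iso_subgraph.mp hHG
    exact ⟨T, Subgraph.connected_iff'.mpr (e.connected_iff.mp hH),
      hHacyclic.embedding e.symm.toEmbedding, ⟨e⟩⟩
  · rintro ⟨T, -, hT, ⟨e⟩⟩
    have c : H.Coloring Bool :=
      H.recolorOfEquiv finTwoEquiv (hT.embedding e.toEmbedding).coloringTwo
    exact ⟨_, containsCopy_epsSubgraph_extend (T.coeCopy.comp e.toCopy) c⟩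

theorem stmt1 {V W : Type*} [Fintype V] [Fintype W] (G : SimpleGraph V)
    (hG : G.Connected)
    (hNoEven : ∀ (v : V) (w : G.Walk v v), w.IsCycle → ¬ Even w.length)
    (H : SimpleGraph W) (hH : H.Connected) :
    (∃ ε : V → Bool, ContainsCopy (epsSubgraph G ε) H) ↔
      ∃ T : G.Subgraph, T.Connected ∧ T.coe.IsAcyclic ∧ Nonempty (H ≃g T.coe) :=
  stmt1_general G hNoEven H hH
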